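/- arXiv:1402.2029 — 8 statements merged into one kernel-verified Lean document; each statement's English description precedes it below -/
import Mathlib

section
/- For every finite simple graph G = (V,E), the sum of the curvature over all vertices equals the Euler characteristic: Σ_{x∈V} K(x) = χ(G). -/
/-!
A `(k+1)`-clique of `G` containing `x` is `x` together with a `k`-clique of the unit sphere `S(x)`.
Summing over `x` therefore counts every `(k+1)`-clique once for each of its `k+1` vertices,
`∑ₓ V_{k-1}(x) = (k+1) v_k`, and the weight `1/(k+1)` in `K(x)` cancels this multiplicity
term by term.
-/

noncomputable section

variable {V : Type} [Fintype V] [DecidableEq V]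

/-- `numCliques G k` is the number of `k`-element cliques (complete subgraphs `K_k`) of `G`. -/
noncomputable def numCliques (G : SimpleGraph V) (k : ℕ) : ℕ :=
  letI : DecidableRel G.Adj := Classical.decRel _
  (G.cliqueFinset k).card

/-- Euler characteristic `χ(G) = Σ_{k ≥ 0} (-1)^k v_k`, where `v_k` is the number of
`(k+1)`-element cliques of `G` (the sum is finite since cliques have at most
`Fintype.card V` vertices). -/
noncomputable def eulerChar (G : SimpleGraph V) : ℤ :=
  ∑ k ∈ Finset.range (Fintype.card V), (-1 : ℤ) ^ k * numCliques G (k + 1)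

/-- The curvature `K(x) = Σ_{k ≥ 0} (-1)^k V_{k-1}(x)/(k+1)`, where `V_{k-1}(x)` is the number of
`k`-element cliques of the unit sphere `S(x)` (the subgraph induced on the neighbors of `x`),
with `V_{-1}(x) = 1` (the empty clique). -/
noncomputable def curvature (G : SimpleGraph V) (x : V) : ℚ :=
  letI : Fintype ↥(G.neighborSet x) := (Set.toFinite _).fintype
  ∑ k ∈ Finset.range (Fintype.card V + 1),
    (-1 : ℚ) ^ k * (numCliques (G.induce (G.neighborSet x)) k : ℚ) / (k + 1)

open Finset

theorem Finset.sum_card_filter_mem {α : Type*} [Fintype α] [DecidableEq α]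
    (B : Finset (Finset α)) :
    ∑ a, #{b ∈ B | a ∈ b} = ∑ b ∈ B, #b := by
  simp_rw [card_filter]
  rw [sum_comm]
  simp

namespace SimpleGraph

variable {α : Type*} [Fintype α] [DecidableEq α] (G : SimpleGraph α) [DecidableRel G.Adj]

theorem card_cliqueFinset_induce (s : Set α) [Fintype s] [DecidablePred (· ∈ s)] (n : ℕ) :
    #((G.induce s).cliqueFinset n) = #{t ∈ G.cliqueFinset n | ∀ v ∈ t, v ∈ s} := by
  rw [← card_map (mapEmbedding (.subtype (· ∈ s))).toEmbedding]
  congr 1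
  ext t
  simp only [mem_map, RelEmbedding.coe_toEmbedding, mapEmbedding_apply, mem_cliqueFinset_iff,
    isNClique_induce_iff, mem_filter]
  constructor
  · rintro ⟨u, hu, rfl⟩
    exact ⟨hu, by simp_all⟩
  · rintro ⟨ht, hts⟩
    exact ⟨t.subtype (· ∈ s), by rwa [subtype_map_of_mem hts], subtype_map_of_mem hts⟩

theorem card_cliqueFinset_succ_filter_mem (x : α) (n : ℕ) :
    #{t ∈ G.cliqueFinset (n + 1) | x ∈ t} =
      #{t ∈ G.cliqueFinset n | ∀ v ∈ t, G.Adj x v} := by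
  refine card_nbij' (·.erase x) (insert x) ?_ ?_ ?_ ?_
  · intro t ht
    simp only [coe_filter, mem_cliqueFinset_iff, Set.mem_ofPred_eq] at ht ⊢
    refine ⟨ht.1.erase_of_mem ht.2, fun v hv => ?_⟩
    exact ht.1.isClique ht.2 (mem_of_mem_erase hv) (ne_of_mem_erase hv).symm
  · intro t ht
    simp only [coe_filter, mem_cliqueFinset_iff, Set.mem_ofPred_eq] at ht ⊢
    exact ⟨ht.1.insert ht.2, mem_insert_self x t⟩
  · intro t ht
    simp only [coe_filter, Set.mem_ofPred_eq] at ht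
    exact insert_erase ht.2
  · intro t ht
    simp only [coe_filter, Set.mem_ofPred_eq] at ht
    exact erase_insert fun hx => G.irrefl (ht.2 x hx)

theorem card_cliqueFinset_induce_neighborSet (x : α) [Fintype (G.neighborSet x)] (n : ℕ) :
    #((G.induce (G.neighborSet x)).cliqueFinset n) =
      #{t ∈ G.cliqueFinset (n + 1) | x ∈ t} := by
  rw [card_cliqueFinset_induce, card_cliqueFinset_succ_filter_mem]
  rfl

theorem sum_card_cliqueFinset_induce_neighborSet [∀ x, Fintype (G.neighborSet x)] (n : ℕ) :
    ∑ x, #((G.induce (G.neighborSet x)).cliqueFinset n) =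
      (n + 1) * #(G.cliqueFinset (n + 1)) := by
  simp_rw [card_cliqueFinset_induce_neighborSet, sum_card_filter_mem]
  rw [sum_const_nat fun t ht => (mem_cliqueFinset_iff.1 ht).card_eq, mul_comm]

end SimpleGraph

theorem numCliques_eq_card {W : Type} [Fintype W] [DecidableEq W] (G : SimpleGraph W)
    [DecidableRel G.Adj] (n : ℕ) : numCliques G n = #(G.cliqueFinset n) := by
  unfold numCliques
  congr!

theorem curvature_eq_sum_card (G : SimpleGraph V) [DecidableRel G.Adj]
    [∀ x, Fintype (G.neighborSet x)] (x : V) :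
    curvature G x = ∑ k ∈ range (Fintype.card V + 1),
      (-1 : ℚ) ^ k * #((G.induce (G.neighborSet x)).cliqueFinset k) / (k + 1) := by
  unfold curvature
  simp only [numCliques_eq_card]
  congr!

theorem eulerChar_eq_sum_card (G : SimpleGraph V) [DecidableRel G.Adj] :
    eulerChar G =
      ∑ k ∈ range (Fintype.card V + 1), (-1 : ℤ) ^ k * #(G.cliqueFinset (k + 1)) := by
  have hempty : G.cliqueFinset (Fintype.card V + 1) = ∅ :=
    SimpleGraph.cliqueFinset_eq_empty_iff.2 (G.cliqueFree_of_card_lt (Nat.lt_succ_self _))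
  simp [eulerChar, numCliques_eq_card, sum_range_succ, hempty]

/-- **Gauss–Bonnet**: `Σ_{x ∈ V} K(x) = χ(G)`. -/
theorem gauss_bonnet (G : SimpleGraph V) :
    ∑ x : V, curvature G x = (eulerChar G : ℚ) := by
  classical
  simp_rw [curvature_eq_sum_card, eulerChar_eq_sum_card]
  rw [sum_comm]
  push_cast
  refine sum_congr rfl fun k _ => ?_
  rw [← sum_div, ← mul_sum, ← Nat.cast_sum, G.sum_card_cliqueFinset_induce_neighborSet]
  push_cast
  field_simp
end
end

section
/- For every finite simple graph G = (V,E) and every injective function f : V → ℝ, the sum of the indices over all vertices equals the Euler characteristic: Σ_{x∈V} i_f(x) = χ(G). -/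
/-!
Counting the empty clique too, `1 - χ(H) = Σ (-1)^|s|` over all cliques `s` of `H`. Adjoining `x`
is a bijection from the cliques of `S_f^-(x)` onto the cliques of `G` whose `f`-maximum is `x`,
and it flips the sign, so `i_f(x)` is minus the signed count of the cliques with maximum `x`.
Since `f` is injective, every nonempty clique has exactly one maximum, and summing over `x`
gives `-Σ_{s ≠ ∅} (-1)^|s| = χ(G)`.
-/

noncomputable section

variable {V : Type} [Fintype V] [DecidableEq V]

/-- The index `i_f(x) = 1 - χ(S_f^-(x))`, where `S_f^-(x)` is the subgraph of `G` induced
on `{y : y adjacent to x and f(y) < f(x)}`. -/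
noncomputable def fIndex (G : SimpleGraph V) (f : V → ℝ) (x : V) : ℤ :=
  letI : Fintype ↥{y | G.Adj x y ∧ f y < f x} := (Set.toFinite _).fintype
  1 - eulerChar (G.induce {y | G.Adj x y ∧ f y < f x})

open Finset
open scoped Classical

namespace SimpleGraph

variable {α : Type*} [Fintype α]

def cliques (G : SimpleGraph α) : Finset (Finset α) := {s | G.IsClique (s : Set α)}

@[simp]
theorem mem_cliques {G : SimpleGraph α} {s : Finset α} :
    s ∈ G.cliques ↔ G.IsClique (s : Set α) := by
  simp [cliques]

@[simp]
theorem empty_mem_cliques (G : SimpleGraph α) : ∅ ∈ G.cliques := by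
  simp

theorem sum_cliques_induce {M : Type*} [AddCommMonoid M] (G : SimpleGraph α) (S : Set α)
    [Fintype S] (φ : ℕ → M) :
    ∑ t ∈ (G.induce S).cliques, φ #t = ∑ s ∈ G.cliques with ↑s ⊆ S, φ #s := by
  refine sum_bij (fun t _ => t.map (.subtype _)) (fun t ht => ?_)
    (fun _ _ _ _ h => Finset.map_injective _ h) (fun s hs => ?_) (fun t _ => by rw [card_map])
  · rw [mem_cliques, isClique_induce_iff] at ht
    exact mem_filter.2 ⟨mem_cliques.2 (by rwa [coe_map]), map_subtype_subset t⟩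
  · obtain ⟨hclique, hsub⟩ := mem_filter.1 hs
    have hmap : (s.subtype (· ∈ S)).map (.subtype _) = s := subtype_map_of_mem hsub
    refine ⟨s.subtype (· ∈ S), ?_, hmap⟩
    rw [mem_cliques, isClique_induce_iff, ← Function.Embedding.coe_subtype, ← coe_map, hmap]
    exact mem_cliques.1 hclique

end SimpleGraph

open SimpleGraph

theorem Finset.sum_filter_nonempty_eq_sum_argmax {ι β M : Type*} [Fintype ι] [DecidableEq ι]
    [LinearOrder β] [AddCommMonoid M] {f : ι → β} (hf : Function.Injective f)
    (T : Finset (Finset ι)) (w : Finset ι → M) :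
    ∑ s ∈ T with s.Nonempty, w s = ∑ x, ∑ s ∈ T with x ∈ s ∧ ∀ y ∈ s, f y ≤ f x, w s := by
  simp_rw [sum_filter, sum_comm (s := univ)]
  refine sum_congr rfl fun s _ => ?_
  rw [← sum_filter]
  split_ifs with hs
  · obtain ⟨x, hx, hmax⟩ := exists_max_image s f hs
    have hargmax : ({x' | x' ∈ s ∧ ∀ y ∈ s, f y ≤ f x'} : Finset ι) = {x} := by
      ext x'
      simp only [mem_filter, mem_univ, true_and, mem_singleton]
      refine ⟨fun ⟨hx', hmax'⟩ => hf (le_antisymm (hmax x' hx') (hmax' x hx)), ?_⟩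
      rintro rfl
      exact ⟨hx, hmax⟩
    rw [hargmax, sum_singleton]
  · simp [not_nonempty_iff_eq_empty.mp hs]

theorem numCliques_eq_card_filter_cliques (G : SimpleGraph V) (k : ℕ) :
    numCliques G k = #{s ∈ G.cliques | #s = k} := by
  unfold numCliques
  congr 1
  ext s
  simp [isNClique_iff]

theorem numCliques_zero (G : SimpleGraph V) : numCliques G 0 = 1 := by
  rw [numCliques_eq_card_filter_cliques, card_eq_one]
  refine ⟨∅, ?_⟩
  ext s
  simp only [mem_filter, mem_cliques, card_eq_zero, mem_singleton, and_iff_right_iff_imp]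
  rintro rfl
  simp

theorem sum_cliques_card_eq (G : SimpleGraph V) (k : ℕ) :
    ∑ s ∈ G.cliques with #s = k, (-1 : ℤ) ^ #s = (-1) ^ k * numCliques G k := by
  rw [sum_congr rfl fun s hs => by rw [(mem_filter.1 hs).2], sum_const,
    numCliques_eq_card_filter_cliques, nsmul_eq_mul, mul_comm]

theorem sum_cliques_neg_one_pow (G : SimpleGraph V) :
    ∑ s ∈ G.cliques, (-1 : ℤ) ^ #s = 1 - eulerChar G := by
  have hcard : ∀ s ∈ G.cliques, #s ∈ range (Fintype.card V + 1) := fun s _ =>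
    mem_range_succ_iff.mpr (card_le_univ s)
  simp only [← sum_fiberwise_of_maps_to hcard, sum_cliques_card_eq, sum_range_succ',
    numCliques_zero, eulerChar, pow_succ, sub_eq_neg_add, ← sum_neg_distrib, pow_zero,
    Nat.cast_one, one_mul, mul_neg_one, neg_mul]

theorem eulerChar_eq_neg_sum_nonempty_cliques (G : SimpleGraph V) :
    eulerChar G = -∑ s ∈ G.cliques with s.Nonempty, (-1 : ℤ) ^ #s := by
  have h := add_sum_erase G.cliques (fun s => (-1 : ℤ) ^ #s) G.empty_mem_cliques
  rw [sum_cliques_neg_one_pow, card_empty, pow_zero] at h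
  simp_rw [nonempty_iff_ne_empty, filter_ne']
  linarith

theorem fIndex_eq_sum_cliques (G : SimpleGraph V) (f : V → ℝ) (x : V) :
    fIndex G f x = ∑ t ∈ G.cliques with ↑t ⊆ {y | G.Adj x y ∧ f y < f x}, (-1 : ℤ) ^ #t := by
  have h := sum_cliques_neg_one_pow (G.induce {y | G.Adj x y ∧ f y < f x})
  rw [sum_cliques_induce] at h
  unfold fIndex
  -- the two sides carry different (but subsingleton) `Fintype` instances on the subtype
  convert h.symm

theorem sum_lower_cliques_eq_neg_sum_cliques_maxAt {β : Type*} [LinearOrder β] (G : SimpleGraph V)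
    {f : V → β} (hf : Function.Injective f) (x : V) :
    ∑ t ∈ G.cliques with ↑t ⊆ {y | G.Adj x y ∧ f y < f x}, (-1 : ℤ) ^ #t
      = -∑ s ∈ G.cliques with x ∈ s ∧ ∀ y ∈ s, f y ≤ f x, (-1 : ℤ) ^ #s := by
  have hx : ∀ t ∈ G.cliques.filter (↑· ⊆ {y | G.Adj x y ∧ f y < f x}), x ∉ t :=
    fun t ht hxt => G.irrefl ((mem_filter.1 ht).2 hxt).1
  rw [← sum_neg_distrib]
  refine sum_nbij' (insert x) (·.erase x) (fun t ht => ?_) (fun s hs => ?_)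
    (fun t ht => erase_insert (hx t ht)) (fun s hs => insert_erase (mem_filter.1 hs).2.1)
    (fun t ht => ?_)
  · obtain ⟨hclique, hlower⟩ := mem_filter.1 ht
    refine mem_filter.2 ⟨?_, mem_insert_self x t, fun y hy => ?_⟩
    · rw [mem_cliques, coe_insert]
      exact (mem_cliques.1 hclique).insert fun y hy _ => (hlower hy).1
    · rcases mem_insert.1 hy with rfl | hy
      · exact le_rfl
      · exact (hlower hy).2.le
  · obtain ⟨hclique, hxs, hmax⟩ := mem_filter.1 hs
    refine mem_filter.2 ⟨?_, fun y hy => ?_⟩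
    · exact mem_cliques.2 ((mem_cliques.1 hclique).subset (coe_subset.2 (erase_subset x s)))
    · obtain ⟨hyx, hys⟩ := mem_erase.1 hy
      exact ⟨mem_cliques.1 hclique hxs hys hyx.symm, (hmax y hys).lt_of_ne (hf.ne hyx)⟩
  · rw [card_insert_of_notMem (hx t ht), pow_succ]
    ring

/-- **Poincaré–Hopf**: for every injective `f : V → ℝ`, `Σ_{x ∈ V} i_f(x) = χ(G)`. -/
theorem poincare_hopf (G : SimpleGraph V) (f : V → ℝ) (hf : Function.Injective f) :
    ∑ x : V, fIndex G f x = eulerChar G := by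
  calc ∑ x, fIndex G f x
      = ∑ x, ∑ t ∈ G.cliques with ↑t ⊆ {y | G.Adj x y ∧ f y < f x}, (-1 : ℤ) ^ #t :=
        sum_congr rfl fun x _ => fIndex_eq_sum_cliques G f x
    _ = -∑ x, ∑ s ∈ G.cliques with x ∈ s ∧ ∀ y ∈ s, f y ≤ f x, (-1 : ℤ) ^ #s := by
        rw [← sum_neg_distrib]
        exact sum_congr rfl fun x _ => sum_lower_cliques_eq_neg_sum_cliques_maxAt G hf x
    _ = -∑ s ∈ G.cliques with s.Nonempty, (-1 : ℤ) ^ #s := by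
        rw [sum_filter_nonempty_eq_sum_argmax hf]
    _ = eulerChar G := (eulerChar_eq_neg_sum_nonempty_cliques G).symm
end
end

section
/- Every automorphism T of a finite tree G (a connected acyclic finite simple graph) has a fixed vertex or a fixed edge: there exists a vertex v with T(v) = v, or an edge {a,b} of G with {T(a),T(b)} = {a,b}. -/
/-!
An automorphism preserves eccentricities, so it maps the center of the tree onto itself. Along a
path in a tree the distance to a fixed vertex has no strict interior local maximum; hence if two
central vertices were at distance at least two, the neighbour of one of them towards the other would
have eccentricity below the radius. So any two distinct central vertices are adjacent, and as a tree
has no triangle, `c`, `T c`, `T (T c)` cannot be three distinct central vertices.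
-/

namespace SimpleGraph

variable {V W : Type*} {G : SimpleGraph V} {G' : SimpleGraph W}

theorem Hom.edist_map_le (f : G →g G') (u v : V) : G'.edist (f u) (f v) ≤ G.edist u v := by
  by_cases huv : G.Reachable u v
  · obtain ⟨p, hp⟩ := huv.exists_walk_length_eq_edist
    exact hp ▸ (p.length_map f) ▸ G'.edist_le (p.map f)
  · simp [edist_eq_top_of_not_reachable huv]

theorem Iso.edist_map (f : G ≃g G') (u v : V) : G'.edist (f u) (f v) = G.edist u v := by
  refine le_antisymm (f.toHom.edist_map_le u v) ?_
  simpa using f.symm.toHom.edist_map_le (f u) (f v)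

theorem Iso.eccent_map (f : G ≃g G') (u : V) : G'.eccent (f u) = G.eccent u := by
  simp only [eccent_def, ← f.toEquiv.iSup_comp (g := G'.edist (f u))]
  exact iSup_congr fun v ↦ f.edist_map u v

theorem Iso.radius_eq (f : G ≃g G') : G'.radius = G.radius := by
  simp only [radius, ← f.toEquiv.iInf_comp (g := G'.eccent)]
  exact iInf_congr fun u ↦ f.eccent_map u

theorem Iso.map_mem_center (f : G ≃g G') {u : V} (hu : u ∈ G.center) : f u ∈ G'.center := by
  rw [mem_center_iff, f.eccent_map, f.radius_eq]
  exact hu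

namespace IsTree

variable (hG : G.IsTree)
include hG

theorem dist_lt_max_of_adj_of_adj {w x a b : V} (ha : G.Adj a x) (hb : G.Adj b x) (hab : a ≠ b) :
    G.dist w x < max (G.dist w a) (G.dist w b) := by
  rcases hG.dist_eq_dist_add_one_of_adj w ha with hxa | hxa
  · exact lt_max_of_lt_left (by omega)
  rcases hG.dist_eq_dist_add_one_of_adj w hb with hxb | hxb
  · exact lt_max_of_lt_right (by omega)
  -- otherwise `a` and `b` are both the penultimate vertex of the unique path from `w` to `x`
  obtain ⟨p, -, hp⟩ := hG.connected.exists_path_of_dist w a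
  obtain ⟨q, -, hq⟩ := hG.connected.exists_path_of_dist w b
  have hpx : (p.concat ha).IsPath := (p.concat ha).isPath_of_length_eq_dist (by simp; omega)
  have hqx : (q.concat hb).IsPath := (q.concat hb).isPath_of_length_eq_dist (by simp; omega)
  have := congrArg (fun r : G.Path w x ↦ r.1.penultimate) <|
    (hG.isAcyclic.subsingleton_path w x).elim ⟨_, hpx⟩ ⟨_, hqx⟩
  simp only [Walk.penultimate_concat] at this
  exact absurd this hab

theorem dist_eq_dist_add_length_of_isPath_cons {w x y v : V} (h : G.Adj x y) (p : G.Walk y v)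
    (hp : (Walk.cons h p).IsPath) (hw : G.dist w y = G.dist w x + 1) :
    G.dist w v = G.dist w y + p.length := by
  induction p generalizing x with
  | nil => simp
  | @cons y z v h' p ih =>
    rw [Walk.cons_isPath_iff, Walk.support_cons, List.mem_cons, not_or] at hp
    have hxz : x ≠ z := fun hxz ↦ hp.2.2 (hxz ▸ p.start_mem_support)
    -- otherwise `y` would be a strict local maximum of `G.dist w`
    have hz : G.dist w z = G.dist w y + 1 := by
      have := hG.dist_lt_max_of_adj_of_adj (w := w) h h'.symm hxz
      rcases hG.dist_eq_dist_add_one_of_adj w h' with hyz | hyz <;> omega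
    rw [ih h' hp.1 hz, hz, Walk.length_cons]
    ring

theorem adj_of_mem_center (hr : G.radius ≠ ⊤) ⦃u v : V⦄ (hu : u ∈ G.center) (hv : v ∈ G.center)
    (huv : u ≠ v) : G.Adj u v := by
  by_contra hadj
  obtain ⟨r, hr_eq⟩ := ENat.ne_top_iff_exists.mp hr
  have hdist_le : ∀ {c}, c ∈ G.center → ∀ w, G.dist w c ≤ r := fun {c} hc w ↦ by
    have := G.edist_le_eccent (u := c) (v := w)
    rwa [hc, ← hr_eq, ← (hG.connected c w).coe_dist_eq_edist, Nat.cast_le, dist_comm] at this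
  obtain ⟨p, hp, hlen⟩ := hG.connected.exists_path_of_dist u v
  have hfar : 1 < G.dist u v := hG.connected.one_lt_dist_of_ne_of_not_adj huv hadj
  cases p with
  | nil => exact huv rfl
  | @cons _ m _ h p =>
    -- the neighbour `m` of `u` towards `v` would have smaller eccentricity than the radius
    have hm : ∀ w, G.dist m w + 1 ≤ r := fun w ↦ by
      rw [dist_comm]
      rcases hG.dist_eq_dist_add_one_of_adj w h with hum | hum
      · linarith [hdist_le hu w]
      · have := hG.dist_eq_dist_add_length_of_isPath_cons h p hp hum
        rw [Walk.length_cons] at hlen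
        linarith [hdist_le hv w]
    have hecc : G.eccent m ≤ (r - 1 : ℕ) := (eccent_le_iff m _).mpr fun w ↦ by
      rw [← (hG.connected m w).coe_dist_eq_edist, Nat.cast_le]
      have := hm w
      omega
    have hlt : ((r - 1 : ℕ) : ℕ∞) < G.radius := by
      rw [← hr_eq, Nat.cast_lt]
      have := hm m
      omega
    exact (hecc.trans_lt hlt).not_ge radius_le_eccent

end IsTree

end SimpleGraph

/-- **Fixed vertex or fixed edge for trees**: every automorphism `T` of a finite tree `G`
(a connected acyclic finite simple graph) has a fixed vertex `v`, or a fixed edge `{a,b}`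
with `{T a, T b} = {a, b}`. -/
theorem tree_automorphism_fixed_vertex_or_edge (V : Type) [Fintype V] [DecidableEq V]
    (G : SimpleGraph V) (hG : G.IsTree) (T : G ≃g G) :
    (∃ v : V, T v = v) ∨
      (∃ a b : V, G.Adj a b ∧ ({T a, T b} : Finset V) = {a, b}) := by
  have : Nonempty V := hG.connected.nonempty
  have hadj := hG.adj_of_mem_center (SimpleGraph.radius_ne_top_iff.mpr hG.connected)
  obtain ⟨c, hc⟩ := G.center_nonempty
  have hTc := T.map_mem_center hc
  have hTTc := T.map_mem_center hTc
  by_cases h1 : T c = c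
  · exact .inl ⟨c, h1⟩
  by_cases h2 : T (T c) = c
  · exact .inr ⟨c, T c, hadj hc hTc (Ne.symm h1), by rw [h2, Finset.pair_comm]⟩
  have h3 : T (T c) ≠ T c := fun h ↦ h1 (T.injective h)
  exact (hG.isAcyclic.cliqueFree le_rfl _ <| SimpleGraph.is3Clique_triple_iff.mpr
    ⟨hadj hc hTc (Ne.symm h1), hadj hc hTTc (Ne.symm h2), hadj hTc hTTc (Ne.symm h3)⟩).elim
end

section
/- For any two real n×m matrices F and G and any real number x, det(I_m + x FᵀG) = Σ_{(A,B)} x^{|A|} det(F[A,B]) det(G[A,B]), where the sum ranges over all pairs of subsets A ⊆ {1,…,n}, B ⊆ {1,…,m} with |A| = |B|, F[A,B] denotes the submatrix of F with rows indexed by A and columns indexed by B, and the determinant of the empty 0×0 matrix is 1. -/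
/-!
Expanding `det (1 + N)` row by row (multilinearity) gives the sum of all principal minors of
`N = x • Fᵀ * G`, and the principal minor on `B` is `x ^ |B| det (F[:, B]ᵀ G[:, B])`. Cauchy–Binet
splits the latter into `∑_A det F[A, B] * det G[A, B]`: expanding `det (P * Q)` column by column
leaves a sum over injective maps `p : Fin k → ι`, and each such `p` is uniquely the increasing
enumeration of its range composed with a permutation, which contributes a sign.
-/

/-- The determinant of the square submatrix of `M` with rows indexed by `A` and columns
indexed by `B` (rows and columns taken in increasing order); it is `0` (junk) when
`|A| ≠ |B|`, and the determinant of the empty `0 × 0` matrix is `1`. -/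
noncomputable def minorDet {n m : ℕ} (M : Matrix (Fin n) (Fin m) ℝ)
    (A : Finset (Fin n)) (B : Finset (Fin m)) : ℝ :=
  if h : B.card = A.card then
    (M.submatrix (⇑(A.orderEmbOfFin rfl)) (⇑(B.orderEmbOfFin h))).det
  else 0

open Matrix Finset

namespace Set.powersetCard

variable {ι : Type*} [LinearOrder ι] {k : ℕ}

def embeddingOfPerm (x : powersetCard ι k × Equiv.Perm (Fin k)) : Fin k ↪ ι :=
  ⟨x.1.val.orderEmbOfFin x.1.prop ∘ x.2,
    (x.1.val.orderEmbOfFin x.1.prop).injective.comp x.2.injective⟩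

theorem range_embeddingOfPerm (x : powersetCard ι k × Equiv.Perm (Fin k)) :
    Set.range (embeddingOfPerm x) = x.1.val :=
  (EquivLike.range_comp _ x.2).trans (Finset.range_orderEmbOfFin _ x.1.prop)

theorem bijective_embeddingOfPerm [Fintype ι] :
    Function.Bijective (embeddingOfPerm (ι := ι) (k := k)) := by
  refine (Fintype.bijective_iff_injective_and_card _).mpr ⟨?_, ?_⟩
  · rintro ⟨s, σ⟩ ⟨t, τ⟩ h
    obtain rfl : s = t := Subtype.ext <| Finset.coe_injective <| by
      rw [← range_embeddingOfPerm (s, σ), h, range_embeddingOfPerm]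
    obtain rfl : σ = τ := Equiv.ext fun i =>
      (s.val.orderEmbOfFin s.prop).injective (DFunLike.congr_fun h i)
    rfl
  · rw [Fintype.card_prod, Fintype.card_perm, Fintype.card_embedding_eq, Fintype.card_fin,
      Nat.descFactorial_eq_factorial_mul_choose, ← Nat.card_eq_fintype_card,
      Set.powersetCard.card, Nat.card_eq_fintype_card, mul_comm]

end Set.powersetCard

namespace Matrix

variable {R : Type*} [CommRing R]

theorem det_one_add_eq_sum_det_submatrix {ι : Type*} [Fintype ι] [DecidableEq ι]
    (N : Matrix ι ι R) :
    det (1 + N) = ∑ s : Finset ι, det (N.submatrix ((↑) : s → ι) (↑)) := by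
  rw [add_comm]
  exact (detRowAlternating.map_add_univ N.row (1 : Matrix ι ι R).row).trans
    (sum_congr rfl fun s _ => det_piecewise_one_eq_submatrix_det N s)

theorem det_submatrix_coe_eq_det_submatrix_orderEmbOfFin {ι : Type*} [LinearOrder ι]
    (N : Matrix ι ι R) (s : Finset ι) :
    det (N.submatrix ((↑) : s → ι) (↑)) =
      det (N.submatrix (s.orderEmbOfFin rfl) (s.orderEmbOfFin rfl)) := by
  rw [← det_submatrix_equiv_self (s.orderIsoOfFin rfl).toEquiv]
  rfl

theorem det_one_add_eq_sum_det_submatrix_orderEmbOfFin {ι : Type*} [Fintype ι] [LinearOrder ι]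
    (N : Matrix ι ι R) :
    det (1 + N) =
      ∑ s : Finset ι, det (N.submatrix (s.orderEmbOfFin rfl) (s.orderEmbOfFin rfl)) := by
  simp only [det_one_add_eq_sum_det_submatrix, det_submatrix_coe_eq_det_submatrix_orderEmbOfFin]

theorem det_mul_eq_sum_prod_mul_det_submatrix {ι κ : Type*} [Fintype ι] [Fintype κ]
    [DecidableEq κ] (P : Matrix κ ι R) (Q : Matrix ι κ R) :
    det (P * Q) = ∑ p : κ → ι, (∏ i, Q (p i) i) * det (P.submatrix id p) := by
  simp only [det_apply', mul_apply, prod_univ_sum, mul_sum, Fintype.piFinset_univ,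
    submatrix_apply, id_eq]
  rw [sum_comm]
  refine sum_congr rfl fun p _ => sum_congr rfl fun σ _ => ?_
  rw [prod_mul_distrib]
  ring

theorem det_mul_eq_sum_embedding {ι κ : Type*} [Fintype ι] [Fintype κ] [DecidableEq κ]
    (P : Matrix κ ι R) (Q : Matrix ι κ R) :
    det (P * Q) = ∑ p : κ ↪ ι, (∏ i, Q (p i) i) * det (P.submatrix id p) := by
  classical
  have hvanish : ∀ p : κ → ι, ¬ Function.Injective p →
      (∏ i, Q (p i) i) * det (P.submatrix id p) = 0 := by
    intro p hp
    obtain ⟨i, j, hij, hne⟩ := Function.not_injective_iff.mp hp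
    rw [det_zero_of_column_eq hne (by simp [hij]), mul_zero]
  rw [det_mul_eq_sum_prod_mul_det_submatrix,
    ← sum_filter_of_ne fun p _ h => not_not.mp (mt (hvanish p) h),
    sum_subtype _ (p := Function.Injective) (by simp)]
  exact Fintype.sum_equiv (Equiv.subtypeInjectiveEquivEmbedding κ ι) _ _ fun _ => rfl

theorem sum_perm_prod_mul_det_submatrix_comp {ι κ : Type*} [Fintype κ] [DecidableEq κ]
    (P : Matrix κ ι R) (Q : Matrix ι κ R) (e : κ → ι) :
    ∑ σ : Equiv.Perm κ, (∏ i, Q (e (σ i)) i) * det (P.submatrix id (e ∘ σ)) =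
      det (P.submatrix id e) * det (Q.submatrix e id) := by
  have hperm : ∀ σ : Equiv.Perm κ, det (P.submatrix id (e ∘ σ)) =
      Equiv.Perm.sign σ * det (P.submatrix id e) := fun σ => by
    rw [← det_permute', submatrix_submatrix, Function.id_comp]
  simp only [hperm, det_apply' (Q.submatrix e id), submatrix_apply, id_eq, mul_sum]
  refine sum_congr rfl fun σ _ => ?_
  ring

theorem det_mul_eq_sum_powersetCard {ι : Type*} [Fintype ι] [LinearOrder ι] {k : ℕ}
    (P : Matrix (Fin k) ι R) (Q : Matrix ι (Fin k) R) :
    det (P * Q) = ∑ s : Set.powersetCard ι k,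
      det (P.submatrix id (s.val.orderEmbOfFin s.prop)) *
        det (Q.submatrix (s.val.orderEmbOfFin s.prop) id) := by
  rw [det_mul_eq_sum_embedding, ← Fintype.sum_bijective _
    Set.powersetCard.bijective_embeddingOfPerm _ _ fun _ => rfl, Fintype.sum_prod_type]
  refine sum_congr rfl fun s _ => ?_
  exact sum_perm_prod_mul_det_submatrix_comp P Q (s.val.orderEmbOfFin s.prop)

theorem det_transpose_mul_eq_sum_powersetCard {ι : Type*} [Fintype ι] [LinearOrder ι] {k : ℕ}
    (F G : Matrix ι (Fin k) R) :
    det (Fᵀ * G) = ∑ s : Set.powersetCard ι k,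
      det (F.submatrix (s.val.orderEmbOfFin s.prop) id) *
        det (G.submatrix (s.val.orderEmbOfFin s.prop) id) := by
  rw [det_mul_eq_sum_powersetCard]
  exact sum_congr rfl fun s _ => by rw [← det_transpose, transpose_submatrix, transpose_transpose]

end Matrix

theorem minorDet_eq_det_submatrix {n m k : ℕ} (M : Matrix (Fin n) (Fin m) ℝ)
    {A : Finset (Fin n)} {B : Finset (Fin m)} (hA : A.card = k) (hB : B.card = k) :
    minorDet M A B = det (M.submatrix (A.orderEmbOfFin hA) (B.orderEmbOfFin hB)) := by
  subst hA
  rw [minorDet, dif_pos hB]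

theorem Finset.sum_powerset_sum_filter_card_eq {α β M : Type*} [Fintype α] [Fintype β]
    [AddCommMonoid M] (f : Finset α → Finset β → M) :
    ∑ A ∈ (univ : Finset α).powerset, ∑ B ∈ (univ : Finset β).powerset.filter (·.card = A.card),
      f A B = ∑ B : Finset β, ∑ A : Set.powersetCard α B.card, f A B := by
  simp only [powerset_univ, sum_filter]
  rw [sum_comm]
  refine sum_congr rfl fun B _ => ?_
  rw [← sum_filter]
  exact sum_subtype _ (fun A => by simp [eq_comm]) _

/-- **Generalized Cauchy–Binet**: for any real `n × m` matrices `F` and `G` and any `x : ℝ`,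
`det(I_m + x FᵀG) = Σ_{(A,B)} x^{|A|} det(F[A,B]) det(G[A,B])`, the sum ranging over all pairs
of subsets `A ⊆ {1,…,n}`, `B ⊆ {1,…,m}` with `|A| = |B|`. -/
theorem cauchy_binet_generalized {n m : ℕ} (F G : Matrix (Fin n) (Fin m) ℝ) (x : ℝ) :
    ((1 : Matrix (Fin m) (Fin m) ℝ) + x • (F.transpose * G)).det =
      ∑ A ∈ (Finset.univ : Finset (Fin n)).powerset,
        ∑ B ∈ (Finset.univ : Finset (Fin m)).powerset.filter (fun B => B.card = A.card),
          x ^ A.card * minorDet F A B * minorDet G A B := by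
  rw [det_one_add_eq_sum_det_submatrix_orderEmbOfFin, sum_powerset_sum_filter_card_eq]
  refine sum_congr rfl fun B _ => ?_
  simp only [submatrix_smul, Pi.smul_apply]
  rw [det_smul, Fintype.card_fin,
    submatrix_mul _ _ _ _ _ Function.bijective_id, ← transpose_submatrix,
    det_transpose_mul_eq_sum_powersetCard, mul_sum]
  refine sum_congr rfl fun A _ => ?_
  rw [minorDet_eq_det_submatrix F A.prop rfl, minorDet_eq_det_submatrix G A.prop rfl, A.prop,
    mul_assoc]
  rfl
end

section
/- Let G be a connected finite simple graph with n vertices and m edges. For every divisor D on G, r(D) − r(K − D) = deg(D) + n − m, where K is the canonical divisor K(v) = deg(v) − 2. -/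
/-!
Baker–Norine Riemann–Roch for graphs: for a connected finite simple graph on `n` vertices
with `m` edges and every divisor `D`, `r(D) - r(K - D) = deg(D) + n - m`, where
`K(v) = deg(v) - 2` is the canonical divisor.
-/

noncomputable section

variable {V : Type} [Fintype V] [DecidableEq V]

/-- The degree of a divisor `D : V → ℤ`, `deg(D) = Σ_v D(v)`. -/
def degDiv (D : V → ℤ) : ℤ := ∑ v : V, D v

/-- The Laplacian acting on integer valued functions:
`(Lf)(v) = deg(v) f(v) − Σ_{w ∼ v} f(w)`. -/
def lapDiv (G : SimpleGraph V) [DecidableRel G.Adj] (f : V → ℤ) : V → ℤ :=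
  fun v => (G.degree v : ℤ) * f v - ∑ w ∈ G.neighborFinset v, f w

/-- Two divisors are linearly equivalent if they differ by `Lf` for some `f : V → ℤ`. -/
def LinEquiv (G : SimpleGraph V) [DecidableRel G.Adj] (D D' : V → ℤ) : Prop :=
  ∃ f : V → ℤ, D - D' = lapDiv G f

/-- A divisor is effective if `D(v) ≥ 0` for all `v`. -/
def Effective (D : V → ℤ) : Prop := ∀ v, 0 ≤ D v

/-- The linear system `|D|` is nonempty: there is an effective divisor linearly
equivalent to `D`. -/
def LinSysNonempty (G : SimpleGraph V) [DecidableRel G.Adj] (D : V → ℤ) : Prop :=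
  ∃ E : V → ℤ, Effective E ∧ LinEquiv G D E

/-- The rank `r(D)`: it is `-1` if `|D| = ∅`, and otherwise the largest integer `k ≥ 0` such
that for every effective divisor `F` with `deg(F) = k` the linear system `|D - F|` is
nonempty.  (The set below contains `-1`, and contains an integer `k ≥ 0` iff `|D - F| ≠ ∅`
for every effective `F` of degree `k`; this condition is monotone downwards, so the
supremum is exactly the rank.) -/
noncomputable def divRank (G : SimpleGraph V) [DecidableRel G.Adj] (D : V → ℤ) : ℤ :=
  sSup ({-1} ∪ {k : ℤ | 0 ≤ k ∧ ∀ F : V → ℤ, Effective F → degDiv F = k →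
    LinSysNonempty G (D - F)})

/-- The canonical divisor `K(v) = deg(v) - 2`. -/
def canonicalDiv (G : SimpleGraph V) [DecidableRel G.Adj] : V → ℤ :=
  fun v => (G.degree v : ℤ) - 2

/-!
Following Cori and Le Borgne: for injective `σ : V → ℤ` let `ν_σ(v)` be the number of
neighbours `w` of `v` with `σ w < σ v`, minus one. Then `ν_σ + ν_{-σ} = K`,
`deg ν_σ = m - n`, and no `ν_σ` is equivalent to an effective divisor (maximum principle).
Conversely, a divisor `D` with `|D| = ∅` is equivalent to a divisor below some `ν_σ`: reduce `D`
at a vertex `v₀` and order the vertices by Dhar's burning algorithm. Together these give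
`r(D) + 1 = min deg⁺(E - ν_σ)` over `E ~ D` and injective `σ`. The involution
`(σ, E) ↦ (-σ, K - E)` sends `E - ν_σ` to its negative, and `deg⁺(-H) = deg⁺ H - deg H` with
`deg (E - ν_σ) = deg D + n - m`.
-/

open Finset

section LinearEquivalence

omit [DecidableEq V]

variable (G : SimpleGraph V) [DecidableRel G.Adj]

lemma lapDiv_apply_eq_sum (f : V → ℤ) (v : V) :
    lapDiv G f v = ∑ w ∈ G.neighborFinset v, (f v - f w) := by
  simp [lapDiv, Finset.sum_sub_distrib]

lemma lapDiv_add (f g : V → ℤ) : lapDiv G (f + g) = lapDiv G f + lapDiv G g := by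
  ext v
  simp only [lapDiv, Pi.add_apply, Finset.sum_add_distrib]
  ring

def lapHom : (V → ℤ) →+ (V → ℤ) := AddMonoidHom.mk' (lapDiv G) (lapDiv_add G)

lemma lapDiv_zero : lapDiv G 0 = 0 := (lapHom G).map_zero

lemma lapDiv_neg (f : V → ℤ) : lapDiv G (-f) = -lapDiv G f := (lapHom G).map_neg f

lemma lapDiv_sub (f g : V → ℤ) : lapDiv G (f - g) = lapDiv G f - lapDiv G g :=
  (lapHom G).map_sub f g

lemma lapDiv_zsmul (c : ℤ) (f : V → ℤ) : lapDiv G (c • f) = c • lapDiv G f :=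
  map_zsmul (lapHom G) c f

lemma degDiv_lapDiv (f : V → ℤ) : degDiv (lapDiv G f) = 0 := by
  have h : degDiv (lapDiv G f) = ∑ v, ∑ w, if G.Adj v w then f v - f w else 0 := by
    simp only [degDiv, lapDiv_apply_eq_sum, G.neighborFinset_eq_filter, Finset.sum_filter]
  have hswap : degDiv (lapDiv G f) = -degDiv (lapDiv G f) := by
    rw [h, ← Finset.sum_neg_distrib]
    nth_rw 1 [Finset.sum_comm]
    refine Finset.sum_congr rfl fun v _ => ?_
    rw [← Finset.sum_neg_distrib]
    refine Finset.sum_congr rfl fun w _ => ?_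
    by_cases hvw : G.Adj v w <;> simp [hvw, G.adj_comm w v]
  omega

lemma degDiv_add (D E : V → ℤ) : degDiv (D + E) = degDiv D + degDiv E :=
  Finset.sum_add_distrib

lemma degDiv_sub (D E : V → ℤ) : degDiv (D - E) = degDiv D - degDiv E :=
  Finset.sum_sub_distrib ..

lemma degDiv_mono {D E : V → ℤ} (h : D ≤ E) : degDiv D ≤ degDiv E :=
  Finset.sum_le_sum fun v _ => h v

lemma Effective.degDiv_nonneg {E : V → ℤ} (hE : Effective E) : 0 ≤ degDiv E :=
  Finset.sum_nonneg fun v _ => hE v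

omit [Fintype V] in
lemma effective_posPart (H : V → ℤ) : Effective H⁺ := fun _ => le_sup_right

lemma degDiv_posPart_neg (H : V → ℤ) : degDiv (-H)⁺ = degDiv H⁺ - degDiv H := by
  have := congrArg degDiv (posPart_sub_negPart H)
  rw [degDiv_sub] at this
  rw [posPart_neg]
  omega

variable {G}

lemma LinEquiv.refl (D : V → ℤ) : LinEquiv G D D := ⟨0, by rw [sub_self, lapDiv_zero]⟩

lemma LinEquiv.symm {D E : V → ℤ} (h : LinEquiv G D E) : LinEquiv G E D := by
  obtain ⟨f, hf⟩ := h
  exact ⟨-f, by rw [lapDiv_neg, ← hf, neg_sub]⟩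

lemma LinEquiv.trans {D E F : V → ℤ} (h : LinEquiv G D E) (h' : LinEquiv G E F) :
    LinEquiv G D F := by
  obtain ⟨f, hf⟩ := h
  obtain ⟨g, hg⟩ := h'
  exact ⟨f + g, by rw [lapDiv_add, ← hf, ← hg, sub_add_sub_cancel]⟩

lemma LinEquiv.degDiv_eq {D E : V → ℤ} (h : LinEquiv G D E) : degDiv D = degDiv E := by
  obtain ⟨f, hf⟩ := h
  have := degDiv_lapDiv G f
  rw [← hf, degDiv_sub] at this
  omega

lemma linEquiv_sub_lapDiv (D f : V → ℤ) : LinEquiv G D (D - lapDiv G f) := ⟨f, sub_sub_cancel D _⟩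

lemma LinEquiv.sub_right {D E : V → ℤ} (h : LinEquiv G D E) (F : V → ℤ) :
    LinEquiv G (D - F) (E - F) := by
  obtain ⟨f, hf⟩ := h
  exact ⟨f, by rw [← hf, sub_sub_sub_cancel_right]⟩

lemma LinEquiv.add_right {D E : V → ℤ} (h : LinEquiv G D E) (F : V → ℤ) :
    LinEquiv G (D + F) (E + F) := by
  obtain ⟨f, hf⟩ := h
  exact ⟨f, by rw [← hf, add_sub_add_right_eq_sub]⟩

lemma LinEquiv.const_sub {D E : V → ℤ} (h : LinEquiv G D E) (K : V → ℤ) :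
    LinEquiv G (K - D) (K - E) := by
  obtain ⟨f, hf⟩ := h
  exact ⟨-f, by rw [lapDiv_neg, ← hf, sub_sub_sub_cancel_left, neg_sub]⟩

lemma LinSysNonempty.of_linEquiv {D E : V → ℤ} (h : LinEquiv G D E)
    (hE : LinSysNonempty G E) : LinSysNonempty G D := by
  obtain ⟨F, hF, hEF⟩ := hE
  exact ⟨F, hF, h.trans hEF⟩

lemma LinSysNonempty.mono {D E : V → ℤ} (hD : LinSysNonempty G D) (hDE : D ≤ E) :
    LinSysNonempty G E := by
  obtain ⟨F, hF, f, hf⟩ := hD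
  refine ⟨F + (E - D), fun v => add_nonneg (hF v) (sub_nonneg.2 (hDE v)), f, ?_⟩
  rw [← hf]
  abel

end LinearEquivalence

section Nu

omit [DecidableEq V]

variable (G : SimpleGraph V) [DecidableRel G.Adj]

/-- For injective `σ`, orient every edge towards its endpoint of larger `σ`; then `nuDiv G σ v`
is the indegree of `v` minus one. These are Baker–Norine's divisors `ν_σ`. -/
def nuDiv (σ : V → ℤ) : V → ℤ := fun v => #{w ∈ G.neighborFinset v | σ w < σ v} - 1

lemma degDiv_canonicalDiv :
    degDiv (canonicalDiv G) = 2 * #G.edgeFinset - 2 * Fintype.card V := by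
  simp only [degDiv, canonicalDiv, Finset.sum_sub_distrib, ← Nat.cast_sum,
    G.sum_degrees_eq_twice_card_edges, Finset.sum_const, Finset.card_univ]
  push_cast
  ring

lemma nuDiv_add_nuDiv_neg {σ : V → ℤ} (hσ : σ.Injective) :
    nuDiv G σ + nuDiv G (-σ) = canonicalDiv G := by
  ext v
  have hsplit := Finset.card_filter_add_card_filter_not (s := G.neighborFinset v)
    (p := fun w => σ w < σ v)
  have hcompl : {w ∈ G.neighborFinset v | ¬σ w < σ v} = {w ∈ G.neighborFinset v | -σ w < -σ v} := by
    refine Finset.filter_congr fun w hw => ?_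
    have : σ w ≠ σ v := hσ.ne (G.ne_of_adj ((G.mem_neighborFinset v w).1 hw)).symm
    omega
  simp only [nuDiv, canonicalDiv, Pi.add_apply, Pi.neg_apply, ← hcompl]
  rw [← G.card_neighborFinset_eq_degree, ← hsplit]
  push_cast
  ring

lemma degDiv_nuDiv_neg (σ : V → ℤ) : degDiv (nuDiv G (-σ)) = degDiv (nuDiv G σ) := by
  have hcount (p : V → Prop) [DecidablePred p] (v : V) :
      #{w ∈ G.neighborFinset v | p w} = ∑ w, if G.Adj v w ∧ p w then 1 else 0 := by
    rw [Finset.card_filter, G.neighborFinset_eq_filter, Finset.sum_filter]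
    simp only [ite_and]
  simp only [degDiv, nuDiv, Finset.sum_sub_distrib, Pi.neg_apply, neg_lt_neg_iff, hcount,
    ← Nat.cast_sum]
  rw [Finset.sum_comm]
  simp only [G.adj_comm]

lemma degDiv_nuDiv {σ : V → ℤ} (hσ : σ.Injective) :
    degDiv (nuDiv G σ) = #G.edgeFinset - Fintype.card V := by
  have := congrArg degDiv (nuDiv_add_nuDiv_neg G hσ)
  rw [degDiv_add, degDiv_nuDiv_neg, degDiv_canonicalDiv] at this
  omega

lemma card_filter_lt_le_lapDiv {f : V → ℤ} {v : V} (hv : ∀ w, f w ≤ f v) :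
    #{w ∈ G.neighborFinset v | f w < f v} ≤ lapDiv G f v := by
  rw [lapDiv_apply_eq_sum, ← Finset.sum_filter_add_sum_filter_not _ (fun w => f w < f v)]
  have hlt : (#{w ∈ G.neighborFinset v | f w < f v} : ℤ)
      ≤ ∑ w ∈ G.neighborFinset v with f w < f v, (f v - f w) := by
    simpa using Finset.card_nsmul_le_sum _ (fun w => f v - f w) 1
      fun w hw => by have := (Finset.mem_filter.1 hw).2; omega
  have hle : 0 ≤ ∑ w ∈ G.neighborFinset v with ¬f w < f v, (f v - f w) :=
    Finset.sum_nonneg fun w _ => sub_nonneg.2 (hv w)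
  omega

/-- Maximum principle: at a vertex maximising `f`, and among those minimising `σ`, every
neighbour below in `σ` is strictly below in `f`, so `lapDiv G f` exceeds `nuDiv G σ` there. -/
lemma not_linSysNonempty_nuDiv [Nonempty V] (σ : V → ℤ) : ¬LinSysNonempty G (nuDiv G σ) := by
  rintro ⟨E, hE, f, hf⟩
  obtain ⟨u, -, hu⟩ := Finset.exists_max_image Finset.univ f Finset.univ_nonempty
  obtain ⟨v, hv, hvmin⟩ := Finset.exists_min_image {w | f w = f u} σ ⟨u, by simp⟩
  have hfv : f v = f u := (Finset.mem_filter.1 hv).2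
  have hsub : {w ∈ G.neighborFinset v | σ w < σ v} ⊆ {w ∈ G.neighborFinset v | f w < f v} := by
    refine Finset.monotone_filter_right _ fun w _ hw => ?_
    have := hu w (Finset.mem_univ w)
    have : f w ≠ f u := fun h => (hvmin w (by simp [h])).not_gt hw
    omega
  have hcard := (Nat.cast_le (α := ℤ)).2 (Finset.card_le_card hsub)
  have hlap := card_filter_lt_le_lapDiv G (f := f) (v := v) fun w => hfv ▸ hu w (Finset.mem_univ w)
  have hval := congrFun hf v
  simp only [nuDiv, Pi.sub_apply] at hval
  have := hE v
  omega

end Nu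

lemma SimpleGraph.Connected.exists_adj_dist_lt {W : Type*} {H : SimpleGraph W} (hH : H.Connected)
    {u v : W} (h : v ≠ u) : ∃ w, H.Adj v w ∧ H.dist u w < H.dist u v := by
  obtain ⟨p, hp⟩ := (hH v u).exists_walk_length_eq_dist
  cases p with
  | nil => exact absurd rfl h
  | cons hadj q =>
    refine ⟨_, hadj, ?_⟩
    rw [H.dist_comm, H.dist_comm (u := u), ← hp, SimpleGraph.Walk.length_cons]
    exact Nat.lt_succ_of_le (SimpleGraph.dist_le q)

section Reduction

variable {G : SimpleGraph V} [DecidableRel G.Adj]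

omit [DecidableEq V] in
/-- The weights `n ^ (M - dist v₀ v)` grow by a factor `n > deg v` towards `v₀`. -/
lemma exists_lapDiv_le_neg_one_of_ne (hG : G.Connected) (v₀ : V) :
    ∃ f : V → ℤ, ∀ v ≠ v₀, lapDiv G f v ≤ -1 := by
  set n := Fintype.card V
  set M := Finset.univ.sup (G.dist v₀)
  refine ⟨fun v => (n : ℤ) ^ (M - G.dist v₀ v), fun v hv => ?_⟩
  obtain ⟨u, hvu, hdist⟩ := hG.exists_adj_dist_lt hv
  have hM : G.dist v₀ v ≤ M := Finset.le_sup (Finset.mem_univ v)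
  have hn : 0 < n := Fintype.card_pos_iff.2 ⟨v₀⟩
  have hdeg : (G.degree v : ℤ) + 1 ≤ n := by exact_mod_cast G.degree_lt_card_verts v
  have hpos : (1 : ℤ) ≤ (n : ℤ) ^ (M - G.dist v₀ v) := one_le_pow₀ (by exact_mod_cast hn)
  have hgrow : (n : ℤ) * n ^ (M - G.dist v₀ v) ≤ n ^ (M - G.dist v₀ u) := by
    rw [← pow_succ']
    exact pow_le_pow_right₀ (by exact_mod_cast hn) (by omega)
  have hsum : (n : ℤ) ^ (M - G.dist v₀ u) ≤ ∑ w ∈ G.neighborFinset v, (n : ℤ) ^ (M - G.dist v₀ w) :=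
    Finset.single_le_sum (f := fun w => (n : ℤ) ^ (M - G.dist v₀ w))
      (fun w _ => by positivity) ((G.mem_neighborFinset v u).2 hvu)
  simp only [lapDiv]
  nlinarith

omit [DecidableEq V] in
lemma exists_linEquiv_nonneg_of_ne (hG : G.Connected) (D : V → ℤ) (v₀ : V) :
    ∃ E, LinEquiv G D E ∧ ∀ v ≠ v₀, 0 ≤ E v := by
  obtain ⟨f, hf⟩ := exists_lapDiv_le_neg_one_of_ne hG v₀
  set T := ∑ v, |D v|
  refine ⟨D - lapDiv G (T • f), linEquiv_sub_lapDiv D _, fun v hv => ?_⟩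
  have hT : |D v| ≤ T := Finset.single_le_sum (fun w _ => abs_nonneg (D w)) (Finset.mem_univ v)
  have := hf v hv
  rw [lapDiv_zsmul, Pi.sub_apply, Pi.smul_apply, smul_eq_mul]
  nlinarith [neg_abs_le (D v), abs_nonneg (D v)]

lemma lapDiv_eq_zero_iff {f : V → ℤ} :
    lapDiv G f = 0 ↔ ∀ v w, G.Reachable v w → f v = f w := by
  have hcast : (G.lapMatrix ℝ).mulVec (fun v => (f v : ℝ)) = fun v => (lapDiv G f v : ℝ) := by
    ext v
    simp [SimpleGraph.lapMatrix_mulVec_apply, lapDiv]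
  have := G.lapMatrix_mulVec_eq_zero_iff_forall_reachable (x := fun v => (f v : ℝ))
  rw [hcast] at this
  simpa [funext_iff] using this

lemma finite_setOf_le_degDiv_eq (b : V → ℤ) (d : ℤ) :
    {E : V → ℤ | b ≤ E ∧ degDiv E = d}.Finite := by
  refine (Set.finite_Icc b (b + fun _ : V => d - degDiv b)).subset
    fun E ⟨hbE, hE⟩ => ⟨hbE, fun v => ?_⟩
  have : E v - b v ≤ ∑ w, (E w - b w) :=
    Finset.single_le_sum (fun w _ => sub_nonneg.2 (hbE w)) (Finset.mem_univ v)
  rw [Finset.sum_sub_distrib] at this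
  simp only [Pi.add_apply, degDiv] at hE ⊢
  omega

lemma lapDiv_indicator_of_mem {A : Finset V} {v : V} (hv : v ∈ A) :
    lapDiv G ((A : Set V).indicator 1) v = #(G.neighborFinset v \ A) := by
  rw [lapDiv_apply_eq_sum, Finset.sdiff_eq_filter, Finset.card_filter]
  push_cast
  refine Finset.sum_congr rfl fun w _ => ?_
  by_cases hw : w ∈ A <;> simp [hv, hw]

lemma lapDiv_indicator_nonpos_of_notMem {A : Finset V} {v : V} (hv : v ∉ A) :
    lapDiv G ((A : Set V).indicator 1) v ≤ 0 := by
  rw [lapDiv_apply_eq_sum]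
  exact Finset.sum_nonpos fun w _ => by
    simp only [Set.indicator_apply, Finset.mem_coe, hv, if_false, Pi.one_apply]
    split_ifs <;> omega

end Reduction

section Reduced

variable {G : SimpleGraph V} [DecidableRel G.Adj]

variable (G) in
/-- Baker–Norine's `v₀`-reduced divisors: firing any nonempty `A ∌ v₀` (one chip along each
edge leaving `A`) would put a vertex of `A` in debt. -/
def IsReducedAt (v₀ : V) (E : V → ℤ) : Prop :=
  (∀ v ≠ v₀, 0 ≤ E v) ∧
    ∀ A : Finset V, A.Nonempty → v₀ ∉ A → ∃ v ∈ A, E v < #(G.neighborFinset v \ A)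

lemma le_sub_lapDiv_indicator {b E : V → ℤ} {A : Finset V} (hbE : b ≤ E)
    (hb : ∀ v ∈ A, b v ≤ 0) (hA : ∀ v ∈ A, #(G.neighborFinset v \ A) ≤ E v) :
    b ≤ E - lapDiv G ((A : Set V).indicator 1) := by
  intro v
  by_cases hv : v ∈ A
  · have := hb v hv
    have := hA v hv
    simp only [Pi.sub_apply, lapDiv_indicator_of_mem hv]
    omega
  · have := lapDiv_indicator_nonpos_of_notMem (G := G) hv
    simp only [Pi.sub_apply]
    have : b v ≤ E v := hbE v
    omega

lemma exists_linEquiv_isReducedAt (hG : G.Connected) (D : V → ℤ) (v₀ : V) :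
    ∃ E, LinEquiv G D E ∧ IsReducedAt G v₀ E := by
  obtain ⟨D₁, hD₁, hD₁_nonneg⟩ := exists_linEquiv_nonneg_of_ne hG D v₀
  set b : V → ℤ := Pi.single v₀ (D₁ v₀)
  set S := {g : V → ℤ | g v₀ = 0 ∧ b ≤ D₁ - lapDiv G g}
  have hinj : S.InjOn (fun g => D₁ - lapDiv G g) := by
    intro g hg g' hg' h
    have hker : lapDiv G (g - g') = 0 := by
      rw [lapDiv_sub, sub_eq_zero]
      exact sub_right_injective h
    ext v
    have := lapDiv_eq_zero_iff.1 hker v v₀ (hG v v₀)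
    simp only [Pi.sub_apply, hg.1, hg'.1] at this
    omega
  have hfin : S.Finite := by
    refine Set.Finite.of_finite_image ((finite_setOf_le_degDiv_eq b (degDiv D₁)).subset ?_) hinj
    rintro _ ⟨g, hg, rfl⟩
    exact ⟨hg.2, (linEquiv_sub_lapDiv D₁ g).degDiv_eq.symm⟩
  have hb_le : b ≤ D₁ := by
    intro v
    by_cases hv : v = v₀
    · subst hv; simp [b]
    · simpa [b, hv] using hD₁_nonneg v hv
  -- A potential maximising `∑ g` admits no legal firing `A ∌ v₀`, which would add `#A` to it.
  obtain ⟨g, ⟨hg₀, hg⟩, hmax⟩ :=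
    S.exists_max_image (fun g => ∑ v, g v) hfin ⟨0, rfl, by rwa [lapDiv_zero, sub_zero]⟩
  refine ⟨D₁ - lapDiv G g, hD₁.trans (linEquiv_sub_lapDiv D₁ g), fun v hv => ?_, ?_⟩
  · simpa [b, hv] using hg v
  intro A hA hv₀
  by_contra! hfire
  have hmem : g + (A : Set V).indicator 1 ∈ S := by
    refine ⟨by simp [hg₀, hv₀], ?_⟩
    rw [lapDiv_add, ← sub_sub]
    exact le_sub_lapDiv_indicator hg (fun v hv => by simp [b, (ne_of_mem_of_not_mem hv hv₀)]) hfire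
  have := hmax _ hmem
  simp only [Pi.add_apply, Finset.sum_add_distrib, Set.indicator_apply, Finset.mem_coe,
    Pi.one_apply, Finset.sum_boole, Finset.filter_mem_eq_inter, Finset.univ_inter] at this
  have := hA.card_pos
  omega

end Reduced

section Burning

variable {G : SimpleGraph V} [DecidableRel G.Adj]

lemma exists_injective_int (W : Type*) [Countable W] : ∃ σ : W → ℤ, σ.Injective :=
  ⟨_, Nat.cast_injective.comp (Countable.exists_injective_nat W).choose_spec⟩

/-- Dhar's burning algorithm: the vertex provided for `A` burns before the rest of `A`, so it
is placed first in an order of `A` obtained by induction. -/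
lemma exists_injective_lt_card_filter {E : V → ℤ}
    (h : ∀ A : Finset V, A.Nonempty → ∃ v ∈ A, E v < #(G.neighborFinset v \ A)) :
    ∃ σ : V → ℤ, σ.Injective ∧ ∀ v, E v < #{w ∈ G.neighborFinset v | σ w < σ v} := by
  suffices key : ∀ A : Finset V, ∃ σ : V → ℤ, σ.Injective ∧
      ∀ v ∈ A, E v < #{w ∈ G.neighborFinset v | w ∉ A ∨ σ w < σ v} by
    obtain ⟨σ, hσ, hE⟩ := key Finset.univ
    exact ⟨σ, hσ, fun v => by simpa using hE v (Finset.mem_univ v)⟩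
  intro A
  induction A using Finset.strongInduction with
  | H A ih =>
  rcases A.eq_empty_or_nonempty with rfl | hA
  · obtain ⟨σ, hσ⟩ := exists_injective_int V
    exact ⟨σ, hσ, by simp⟩
  obtain ⟨v, hvA, hv⟩ := h A hA
  obtain ⟨σ', hσ', hE'⟩ := ih (A.erase v) (Finset.erase_ssubset hvA)
  have : Nonempty V := ⟨v⟩
  obtain ⟨u₀, hu₀⟩ := Finite.exists_min σ'
  set σ := Function.update σ' v (σ' u₀ - 1)
  have hσv : ∀ w ≠ v, σ v < σ w := fun w hw => by
    simp only [σ, Function.update_self, Function.update_of_ne hw]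
    have := hu₀ w
    omega
  refine ⟨σ, fun a b hab => ?_, fun u hu => ?_⟩
  · by_contra hne
    rcases eq_or_ne a v with rfl | ha
    · exact (hσv b (Ne.symm hne)).ne hab
    rcases eq_or_ne b v with rfl | hb
    · exact (hσv a ha).ne' hab
    simp only [σ, Function.update_of_ne ha, Function.update_of_ne hb] at hab
    exact hne (hσ' hab)
  rcases eq_or_ne u v with rfl | huv
  · refine hv.trans_le (Nat.cast_le.2 (Finset.card_le_card fun w hw => ?_))
    rw [Finset.mem_sdiff] at hw
    exact Finset.mem_filter.2 ⟨hw.1, Or.inl hw.2⟩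
  refine (hE' u (Finset.mem_erase.2 ⟨huv, hu⟩)).trans_le
    (Nat.cast_le.2 (Finset.card_le_card (Finset.monotone_filter_right _ fun w _ hw => ?_)))
  rcases eq_or_ne w v with rfl | hwv
  · exact Or.inr (hσv u huv)
  simpa [σ, Function.update_of_ne hwv, Function.update_of_ne huv, hwv] using hw

lemma exists_le_nuDiv_of_isReducedAt {v₀ : V} {E : V → ℤ} (hE : IsReducedAt G v₀ E)
    (hv₀ : E v₀ < 0) : ∃ σ : V → ℤ, σ.Injective ∧ E ≤ nuDiv G σ := by
  have hburn (A : Finset V) (hA : A.Nonempty) : ∃ v ∈ A, E v < #(G.neighborFinset v \ A) := by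
    by_cases h : v₀ ∈ A
    · exact ⟨v₀, h, hv₀.trans_le (Nat.cast_nonneg _)⟩
    · exact hE.2 A hA h
  obtain ⟨σ, hσ, hlt⟩ := exists_injective_lt_card_filter hburn
  exact ⟨σ, hσ, fun v => by have := hlt v; simp only [nuDiv]; omega⟩

lemma exists_linEquiv_le_nuDiv (hG : G.Connected) {D : V → ℤ} (hD : ¬LinSysNonempty G D) :
    ∃ σ : V → ℤ, σ.Injective ∧ ∃ E, LinEquiv G D E ∧ E ≤ nuDiv G σ := by
  obtain ⟨v₀⟩ := hG.nonempty
  obtain ⟨E, hDE, hE⟩ := exists_linEquiv_isReducedAt hG D v₀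
  have hv₀ : E v₀ < 0 := by
    by_contra! h
    exact hD ⟨E, fun v => if hv : v = v₀ then hv ▸ h else hE.1 v hv, hDE⟩
  obtain ⟨σ, hσ, hle⟩ := exists_le_nuDiv_of_isReducedAt hE hv₀
  exact ⟨σ, hσ, E, hDE, hle⟩

end Burning

section Rank

variable {G : SimpleGraph V} [DecidableRel G.Adj]

variable (G) in
def nuExcesses (D : V → ℤ) : Set ℤ :=
  {x | ∃ σ : V → ℤ, σ.Injective ∧ ∃ E, LinEquiv G D E ∧ x = degDiv (E - nuDiv G σ)⁺}

lemma divRank_eq_of_isLeast [Nonempty V] {D : V → ℤ} {t : ℤ}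
    (ht : IsLeast {k | ∃ F, Effective F ∧ degDiv F = k ∧ ¬LinSysNonempty G (D - F)} t) :
    divRank G D = t - 1 := by
  obtain ⟨⟨F₀, hF₀, hF₀t, hF₀D⟩, htmin⟩ := ht
  have ht0 : 0 ≤ t := hF₀t ▸ hF₀.degDiv_nonneg
  refine IsGreatest.csSup_eq ⟨?_, ?_⟩
  · rcases ht0.eq_or_lt with rfl | htpos
    · exact Or.inl rfl
    refine Or.inr ⟨by omega, fun F hF hFt => ?_⟩
    by_contra hFD
    have := htmin ⟨F, hF, hFt, hFD⟩
    omega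
  rintro k (rfl | ⟨hk, hkF⟩)
  · omega
  by_contra! htk
  obtain ⟨v⟩ := ‹Nonempty V›
  have hkt : 0 ≤ k - t := by omega
  have hsingle : (0 : V → ℤ) ≤ Pi.single v (k - t) := by simpa using hkt
  have hF₁ : Effective (F₀ + Pi.single v (k - t)) := fun w => add_nonneg (hF₀ w) (hsingle w)
  refine hF₀D ((hkF _ hF₁ ?_).mono (sub_le_sub_left (le_add_of_nonneg_right hsingle) D))
  rw [degDiv_add, hF₀t, degDiv, Finset.sum_pi_single', if_pos (Finset.mem_univ v)]
  ring

omit [DecidableEq V] in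
lemma not_linSysNonempty_sub_posPart [Nonempty V] {D E : V → ℤ} (hDE : LinEquiv G D E)
    (σ : V → ℤ) : ¬LinSysNonempty G (D - (E - nuDiv G σ)⁺) := fun h =>
  not_linSysNonempty_nuDiv G σ <| (h.of_linEquiv (hDE.sub_right _).symm).mono <|
    sub_le_comm.1 (le_posPart _)

lemma exists_mem_nuExcesses_le (hG : G.Connected) {D F : V → ℤ} (hF : Effective F)
    (hDF : ¬LinSysNonempty G (D - F)) : ∃ x ∈ nuExcesses G D, x ≤ degDiv F := by
  obtain ⟨σ, hσ, E, hE, hEσ⟩ := exists_linEquiv_le_nuDiv hG hDF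
  refine ⟨_, ⟨σ, hσ, E + F, by simpa using hE.add_right F, rfl⟩, degDiv_mono ?_⟩
  refine sup_le (fun v => ?_) hF
  have : E v ≤ nuDiv G σ v := hEσ v
  simp only [Pi.sub_apply, Pi.add_apply]
  omega

lemma isLeast_nuExcesses (hG : G.Connected) (D : V → ℤ) :
    IsLeast (nuExcesses G D) (divRank G D + 1) := by
  have : Nonempty V := hG.nonempty
  obtain ⟨σ₀, hσ₀⟩ := exists_injective_int V
  obtain ⟨t, ht, htmin⟩ := Int.exists_least_of_bdd (P := (· ∈ nuExcesses G D))
    ⟨0, fun x ⟨_, _, _, _, hx⟩ => hx ▸ (effective_posPart _).degDiv_nonneg⟩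
    ⟨_, σ₀, hσ₀, D, LinEquiv.refl D, rfl⟩
  have hbad : IsLeast {k | ∃ F, Effective F ∧ degDiv F = k ∧ ¬LinSysNonempty G (D - F)} t := by
    obtain ⟨σ, hσ, E, hE, rfl⟩ := ht
    refine ⟨⟨_, effective_posPart _, rfl, not_linSysNonempty_sub_posPart hE σ⟩, ?_⟩
    rintro k ⟨F, hF, rfl, hDF⟩
    obtain ⟨x, hx, hxF⟩ := exists_mem_nuExcesses_le hG hF hDF
    exact (htmin x hx).trans hxF
  rw [divRank_eq_of_isLeast hbad, sub_add_cancel]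
  exact ⟨ht, htmin⟩

end Rank

omit [DecidableEq V] in
/-- The involution `(σ, E) ↦ (-σ, K - E)` turns `E - ν_σ` into `ν_σ - E`. -/
lemma sub_mem_nuExcesses_canonicalDiv_sub {G : SimpleGraph V} [DecidableRel G.Adj]
    {D : V → ℤ} {x : ℤ} (hx : x ∈ nuExcesses G D) :
    x - (degDiv D + Fintype.card V - #G.edgeFinset) ∈ nuExcesses G (canonicalDiv G - D) := by
  obtain ⟨σ, hσ, E, hE, rfl⟩ := hx
  refine ⟨-σ, neg_injective.comp hσ, canonicalDiv G - E, hE.const_sub _, ?_⟩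
  have hsymm : canonicalDiv G - E - nuDiv G (-σ) = -(E - nuDiv G σ) := by
    rw [← nuDiv_add_nuDiv_neg G hσ]
    abel
  rw [hsymm, degDiv_posPart_neg, degDiv_sub, degDiv_nuDiv G hσ, ← hE.degDiv_eq]
  ring

/-- **Riemann–Roch for graphs** (Baker–Norine): for a connected finite simple graph `G` with
`n` vertices and `m` edges and every divisor `D`,
`r(D) - r(K - D) = deg(D) + n - m`. -/
theorem riemann_roch (G : SimpleGraph V) [DecidableRel G.Adj] (hG : G.Connected)
    (D : V → ℤ) :
    divRank G D - divRank G (canonicalDiv G - D) =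
      degDiv D + (Fintype.card V : ℤ) - (G.edgeFinset.card : ℤ) := by
  have hD := isLeast_nuExcesses hG D
  have hKD := isLeast_nuExcesses hG (canonicalDiv G - D)
  have h₁ := hKD.2 (sub_mem_nuExcesses_canonicalDiv_sub hD.1)
  have h₂ := hD.2 (by simpa using sub_mem_nuExcesses_canonicalDiv_sub hKD.1)
  rw [degDiv_sub, degDiv_canonicalDiv] at h₂
  omega
end
end

section
/- For a prime p, the graph on the multiplicative group (ℤ/pℤ)* in which distinct units u and v are adjacent if and only if v = u² or u = v² is connected if and only if p = 2 or p is a Fermat prime, i.e., p = 2^(2^k) + 1 for some integer k ≥ 0. -/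
/-!
Along an edge the property "`u ^ 2 ^ k = 1` for some `k`" passes in both directions, and every
`u` is joined to `u ^ 2 ^ k` by repeated squaring. Hence `v` is reachable from `1` exactly when
its order is a power of `2`, so the squaring graph of a group is connected iff the group is a
`2`-group. For `(ℤ/pℤ)ˣ`, of order `p - 1`, this means `p - 1 = 2 ^ n`, and a prime `2 ^ n + 1`
with `n ≠ 0` forces `n` to be a power of `2`.
-/

/-- The graph on the group of units of `ℤ/pℤ` in which two distinct units `u, v` are adjacent
if and only if `v = u²` or `u = v²`. -/
def squareGraph (p : ℕ) : SimpleGraph (ZMod p)ˣ :=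
  SimpleGraph.fromRel (fun u v => v = u ^ 2)

def squaringGraph (M : Type*) [Monoid M] : SimpleGraph M :=
  SimpleGraph.fromRel fun u v => v = u ^ 2

section Monoid

variable {M : Type*} [Monoid M]

theorem squaringGraph_reachable_sq (u : M) : (squaringGraph M).Reachable u (u ^ 2) := by
  by_cases h : u = u ^ 2
  · rw [← h]
  · exact SimpleGraph.Adj.reachable ((SimpleGraph.fromRel_adj _ _ _).mpr ⟨h, .inl rfl⟩)

theorem squaringGraph_reachable_pow_two_pow (u : M) (n : ℕ) :
    (squaringGraph M).Reachable u (u ^ 2 ^ n) := by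
  induction n with
  | zero => simp
  | succ n ih =>
    rw [pow_succ, pow_mul]
    exact ih.trans (squaringGraph_reachable_sq _)

theorem exists_pow_two_pow_eq_one_of_adj {u v : M} (huv : (squaringGraph M).Adj u v)
    (hu : ∃ k, u ^ 2 ^ k = 1) : ∃ k, v ^ 2 ^ k = 1 := by
  obtain ⟨k, hk⟩ := hu
  rcases ((SimpleGraph.fromRel_adj _ _ _).mp huv).2 with rfl | rfl
  · exact ⟨k, by rw [← pow_mul, mul_comm, pow_mul, hk, one_pow]⟩
  · exact ⟨k + 1, by rw [pow_succ', pow_mul, hk]⟩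

theorem exists_pow_two_pow_eq_one_of_reachable {u v : M} (huv : (squaringGraph M).Reachable u v)
    (hu : ∃ k, u ^ 2 ^ k = 1) : ∃ k, v ^ 2 ^ k = 1 := by
  obtain ⟨w⟩ := huv
  induction w with
  | nil => exact hu
  | cons hadj _ ih => exact ih (exists_pow_two_pow_eq_one_of_adj hadj hu)

theorem squaringGraph_reachable_one_iff (v : M) :
    (squaringGraph M).Reachable 1 v ↔ ∃ k, v ^ 2 ^ k = 1 := by
  constructor
  · exact fun h => exists_pow_two_pow_eq_one_of_reachable h ⟨0, one_pow _⟩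
  · rintro ⟨k, hk⟩
    exact (hk ▸ squaringGraph_reachable_pow_two_pow v k).symm

end Monoid

theorem squaringGraph_connected_iff_isPGroup {G : Type*} [Group G] :
    (squaringGraph G).Connected ↔ IsPGroup 2 G := by
  rw [SimpleGraph.connected_iff_exists_forall_reachable]
  refine ⟨fun ⟨u, hu⟩ v => ?_, fun h => ⟨1, fun v => (squaringGraph_reachable_one_iff v).mpr (h v)⟩⟩
  exact (squaringGraph_reachable_one_iff v).mp ((hu 1).symm.trans (hu v))

theorem Nat.Prime.exists_sub_one_eq_two_pow_iff {p : ℕ} (hp : p.Prime) :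
    (∃ n, p - 1 = 2 ^ n) ↔ p = 2 ∨ ∃ k, p = 2 ^ 2 ^ k + 1 := by
  constructor
  · rintro ⟨n, hn⟩
    have hp_eq : p = 2 ^ n + 1 := by have := hp.two_le; omega
    rcases eq_or_ne n 0 with rfl | hn0
    · exact .inl hp_eq
    · obtain ⟨k, rfl⟩ := Nat.pow_of_pow_add_prime one_lt_two hn0 (hp_eq ▸ hp)
      exact .inr ⟨k, hp_eq⟩
  · rintro (rfl | ⟨k, rfl⟩)
    · exact ⟨0, rfl⟩
    · exact ⟨2 ^ k, Nat.add_sub_cancel _ _⟩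

/-- For a prime `p`, the squaring graph on `(ℤ/pℤ)ˣ` is connected if and only if `p = 2` or
`p` is a Fermat prime, i.e. `p = 2^(2^k) + 1` for some `k ≥ 0`. -/
theorem squareGraph_connected_iff_fermat (p : ℕ) (hp : p.Prime) :
    (squareGraph p).Connected ↔ p = 2 ∨ ∃ k : ℕ, p = 2 ^ 2 ^ k + 1 := by
  have : Fact p.Prime := ⟨hp⟩
  have hcard : Nat.card (ZMod p)ˣ = p - 1 := by
    rw [Nat.card_eq_fintype_card, ZMod.card_units]
  change (squaringGraph (ZMod p)ˣ).Connected ↔ _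
  rw [squaringGraph_connected_iff_isPGroup, IsPGroup.iff_card, hcard]
  exact hp.exists_sub_one_eq_two_pow_iff
end

section
/- For a prime p, the graph on the multiplicative group (ℤ/pℤ)* in which distinct units u and v are adjacent if and only if v = u², u = v², v = u³, or u = v³ is connected if and only if p is a Pierpont prime, i.e., p − 1 = 2^a · 3^b for some integers a, b ≥ 0. -/
/-!
The exponent `n = p - 1` of the cyclic group `(ℤ/pℤ)ˣ` annihilates every unit. If `n = 2^a 3^b`,
squaring `a` times and then cubing `b` times joins any `u` to `u^n = 1`. Conversely, if a prime
`q ∉ {2, 3}` divides `n`, put `m = n / q`: the set `{x | x^m = 1}` is closed along every edge, in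
both directions (if `u = v^k` with `k ∈ {2, 3}` and `u^m = 1`, then `v^m` is killed by the coprime
exponents `k` and `q`), so connectivity would force `x^m = 1` for all `x`, i.e. `n ∣ m`.
-/

/-- The graph on the group of units of `ℤ/pℤ` in which two distinct units `u, v` are adjacent
if and only if `v = u²`, `u = v²`, `v = u³` or `u = v³`. -/
def squareCubeGraph (p : ℕ) : SimpleGraph (ZMod p)ˣ :=
  SimpleGraph.fromRel (fun u v => v = u ^ 2 ∨ v = u ^ 3)

theorem Nat.exists_eq_two_pow_mul_three_pow {n : ℕ} (hn : n ≠ 0)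
    (h : ∀ q ∈ n.primeFactors, q = 2 ∨ q = 3) : ∃ a b : ℕ, n = 2 ^ a * 3 ^ b := by
  have hsupp : n.factorization.support ⊆ {2, 3} := by
    intro q hq
    rw [Nat.support_factorization] at hq
    simpa using h q hq
  refine ⟨n.factorization 2, n.factorization 3, ?_⟩
  conv_lhs => rw [← Nat.prod_factorization_pow_eq_self hn]
  rw [Finsupp.prod_of_support_subset _ hsupp _ (fun _ _ => pow_zero _)]
  simp

theorem SimpleGraph.Reachable.mem_of_forall_adj {V : Type*} {G : SimpleGraph V} {S : Set V}
    (hS : ∀ u v, G.Adj u v → u ∈ S → v ∈ S) {u v : V} (h : G.Reachable u v) (hu : u ∈ S) :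
    v ∈ S := by
  obtain ⟨w⟩ := h
  induction w with
  | nil => exact hu
  | cons hadj _ ih => exact ih (hS _ _ hadj hu)

theorem pow_eq_one_of_pow_pow_eq_one {M : Type*} [Monoid M] {x : M} {k m q : ℕ}
    (hk : (x ^ k) ^ m = 1) (hq : x ^ (m * q) = 1) (hkq : k.Coprime q) : x ^ m = 1 := by
  have hgcd : (x ^ m) ^ k.gcd q = 1 :=
    pow_gcd_eq_one.2 ⟨by rwa [← pow_mul, mul_comm, pow_mul], by rwa [← pow_mul]⟩
  rwa [hkq.gcd_eq_one, pow_one] at hgcd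

def squareCubeGraphOn (M : Type*) [Monoid M] : SimpleGraph M :=
  SimpleGraph.fromRel fun u v => v = u ^ 2 ∨ v = u ^ 3

namespace squareCubeGraphOn

variable {M : Type*} [Monoid M]

theorem reachable_pow {k : ℕ} (hk : k = 2 ∨ k = 3) (u : M) :
    (squareCubeGraphOn M).Reachable u (u ^ k) := by
  by_cases h : u ^ k = u
  · rw [h]
  · exact SimpleGraph.Adj.reachable ⟨Ne.symm h, Or.inl (by rcases hk with rfl | rfl <;> simp)⟩

theorem reachable_pow_pow {k : ℕ} (hk : k = 2 ∨ k = 3) (u : M) (n : ℕ) :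
    (squareCubeGraphOn M).Reachable u (u ^ k ^ n) := by
  induction n with
  | zero => rw [pow_zero, pow_one]
  | succ n ih => exact ih.trans (by rw [pow_succ, pow_mul]; exact reachable_pow hk _)

theorem reachable_pow_two_pow_mul_three_pow (u : M) (a b : ℕ) :
    (squareCubeGraphOn M).Reachable u (u ^ (2 ^ a * 3 ^ b)) := by
  rw [pow_mul]
  exact (reachable_pow_pow (Or.inl rfl) u a).trans (reachable_pow_pow (Or.inr rfl) _ b)

theorem connected_of_exponent_eq {a b : ℕ} (h : Monoid.exponent M = 2 ^ a * 3 ^ b) :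
    (squareCubeGraphOn M).Connected := by
  have reachable_one (u : M) : (squareCubeGraphOn M).Reachable u 1 := by
    simpa [← h, Monoid.pow_exponent_eq_one] using reachable_pow_two_pow_mul_three_pow u a b
  exact ⟨fun u v => (reachable_one u).trans (reachable_one v).symm⟩

theorem pow_eq_one_of_adj {m q : ℕ} (h2 : Nat.Coprime 2 q) (h3 : Nat.Coprime 3 q)
    (hmq : ∀ x : M, x ^ (m * q) = 1) {u v : M} (hadj : (squareCubeGraphOn M).Adj u v)
    (hu : u ^ m = 1) : v ^ m = 1 := by
  rcases hadj.2 with (rfl | rfl) | (rfl | rfl)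
  · rw [← pow_mul, mul_comm, pow_mul, hu, one_pow]
  · rw [← pow_mul, mul_comm, pow_mul, hu, one_pow]
  · exact pow_eq_one_of_pow_pow_eq_one hu (hmq v) h2
  · exact pow_eq_one_of_pow_pow_eq_one hu (hmq v) h3

theorem eq_two_or_eq_three_of_mem_primeFactors_exponent {q : ℕ} (hM : Monoid.exponent M ≠ 0)
    (hconn : (squareCubeGraphOn M).Preconnected) (hq : q ∈ (Monoid.exponent M).primeFactors) :
    q = 2 ∨ q = 3 := by
  by_contra! hq23
  have hqprime := Nat.prime_of_mem_primeFactors hq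
  obtain ⟨m, hm⟩ := Nat.dvd_of_mem_primeFactors hq
  have hkill (x : M) : x ^ (m * q) = 1 := by rw [mul_comm, ← hm, Monoid.pow_exponent_eq_one]
  have hcop (k : ℕ) (hk : k.Prime) (hkq : k ≠ q) : k.Coprime q :=
    (Nat.coprime_primes hk hqprime).2 hkq
  have hall (x : M) : x ^ m = 1 :=
    (hconn 1 x).mem_of_forall_adj (S := {x | x ^ m = 1})
      (fun _ _ => pow_eq_one_of_adj (hcop 2 Nat.prime_two hq23.1.symm)
        (hcop 3 Nat.prime_three hq23.2.symm) hkill) (one_pow m)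
  have hdvd : q * m ∣ m := hm ▸ Monoid.exponent_dvd_of_forall_pow_eq_one hall
  have hm0 : m ≠ 0 := by rintro rfl; exact hM (by simpa using hm)
  exact hqprime.not_dvd_one <|
    (Nat.mul_dvd_mul_iff_right (Nat.pos_of_ne_zero hm0)).1 (by rwa [one_mul])

theorem connected_iff (hM : Monoid.exponent M ≠ 0) :
    (squareCubeGraphOn M).Connected ↔ ∃ a b : ℕ, Monoid.exponent M = 2 ^ a * 3 ^ b :=
  ⟨fun hconn => Nat.exists_eq_two_pow_mul_three_pow hM fun _ =>
      eq_two_or_eq_three_of_mem_primeFactors_exponent hM hconn.preconnected,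
    fun ⟨_, _, h⟩ => connected_of_exponent_eq h⟩

end squareCubeGraphOn

theorem ZMod.exponent_units (p : ℕ) [Fact p.Prime] : Monoid.exponent (ZMod p)ˣ = p - 1 := by
  rw [IsCyclic.exponent_eq_card, Nat.card_eq_fintype_card, ZMod.card_units]

/-- For a prime `p`, the square-and-cube graph on `(ℤ/pℤ)ˣ` is connected if and only if `p`
is a Pierpont prime, i.e. `p - 1 = 2^a · 3^b` for some `a, b ≥ 0`. -/
theorem squareCubeGraph_connected_iff_pierpont (p : ℕ) (hp : p.Prime) :
    (squareCubeGraph p).Connected ↔ ∃ a b : ℕ, p - 1 = 2 ^ a * 3 ^ b := by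
  have : Fact p.Prime := ⟨hp⟩
  have hexp : Monoid.exponent (ZMod p)ˣ = p - 1 := ZMod.exponent_units p
  rw [← hexp]
  exact squareCubeGraphOn.connected_iff (hexp ▸ Nat.sub_ne_zero_of_lt hp.one_lt)
end

section
/- For every prime p and every a ∈ ℤ/pℤ, the graph on ℤ/pℤ in which distinct elements x and y are adjacent if and only if y = x² + a or x = y² + a has at most two triangles: the number of three-element cliques is 0, 1 or 2. -/
/-!
Write `f x = x² + a`. Each vertex `x` has a single "outgoing" edge `x — f x`, so a triangle
must be a 3-cycle `{x, f x, f (f x)}` of `f`. Distinct triangles are therefore disjoint, and all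
their vertices are roots of `f (f (f x)) - x`, a nonzero polynomial of degree 8 over the field
`ℤ/pℤ`. Hence there are at most `⌊8 / 3⌋ = 2` triangles.
-/

/-- The quadratic orbital graph on `ℤ/pℤ`: two distinct vertices `x, y` are adjacent if and
only if `y = x² + a` or `x = y² + a`. -/
def quadGraph (p : ℕ) (a : ZMod p) : SimpleGraph (ZMod p) :=
  SimpleGraph.fromRel (fun x y => y = x ^ 2 + a)

open Function Finset Polynomial

def mapGraph {α : Type*} (f : α → α) : SimpleGraph α :=
  SimpleGraph.fromRel fun x y => y = f x

namespace mapGraph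

section

variable {α : Type*}

variable {f : α → α} [DecidableEq α]

lemma exists_isPeriodicPt_eq_of_isNClique_three {s : Finset α}
    (hs : (mapGraph f).IsNClique 3 s) :
    ∃ x, IsPeriodicPt f 3 x ∧ s = {x, f x, f (f x)} := by
  obtain ⟨x, y, z, hxy, hxz, hyz, rfl⟩ := card_eq_three.mp hs.card_eq
  have hxy' := hs.isClique (by simp) (by simp) hxy
  have hxz' := hs.isClique (by simp) (by simp) hxz
  have hyz' := hs.isClique (by simp) (by simp) hyz
  simp only [mapGraph, SimpleGraph.fromRel_adj] at hxy' hxz' hyz'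
  -- Of the eight orientations of the three edges, only the two cyclic ones avoid two edges
  -- leaving the same vertex, which would force two vertices to coincide.
  obtain ⟨-, rfl | rfl⟩ := hxy' <;> obtain ⟨-, h | h⟩ := hyz' <;>
    obtain ⟨-, h' | h'⟩ := hxz'
  · exact absurd h'.symm hyz
  · subst h; exact ⟨x, h'.symm, rfl⟩
  · exact absurd h'.symm hyz
  · exact absurd (h.trans h'.symm).symm hxy
  · exact absurd h.symm hxz
  · exact absurd h.symm hxz
  · subst h'; exact ⟨y, h.symm, insert_comm _ _ _⟩
  · exact absurd (h'.trans h.symm) hxy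

lemma orbit_eq_of_isPeriodicPt_three {x u : α} (hx : IsPeriodicPt f 3 x)
    (hu : u ∈ ({x, f x, f (f x)} : Finset α)) :
    ({u, f u, f (f u)} : Finset α) = {x, f x, f (f x)} := by
  have hx : f (f (f x)) = x := hx
  simp only [mem_insert, mem_singleton] at hu
  rcases hu with rfl | rfl | rfl <;> ext <;> simp only [mem_insert, mem_singleton, hx] <;> tauto

lemma isPeriodicPt_three_of_mem_isNClique_three {s : Finset α} (hs : (mapGraph f).IsNClique 3 s)
    {u : α} (hu : u ∈ s) : IsPeriodicPt f 3 u := by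
  obtain ⟨x, hx, rfl⟩ := exists_isPeriodicPt_eq_of_isNClique_three hs
  simp only [mem_insert, mem_singleton] at hu
  rcases hu with rfl | rfl | rfl
  exacts [hx, hx.apply, hx.apply.apply]

lemma eq_of_isNClique_three_of_mem {s t : Finset α} (hs : (mapGraph f).IsNClique 3 s)
    (ht : (mapGraph f).IsNClique 3 t) {u : α} (hus : u ∈ s) (hut : u ∈ t) : s = t := by
  obtain ⟨x, hx, rfl⟩ := exists_isPeriodicPt_eq_of_isNClique_three hs
  obtain ⟨y, hy, rfl⟩ := exists_isPeriodicPt_eq_of_isNClique_three ht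
  rw [← orbit_eq_of_isPeriodicPt_three hx hus, orbit_eq_of_isPeriodicPt_three hy hut]

end

lemma three_mul_card_isNClique_three_le {α : Type*} [Fintype α] (f : α → α) :
    3 * Nat.card {s : Finset α // (mapGraph f).IsNClique 3 s} ≤ (ptsOfPeriod f 3).ncard := by
  classical
  rw [Nat.card_eq_fintype_card, Fintype.card_subtype]
  set T := univ.filter fun s : Finset α => (mapGraph f).IsNClique 3 s
  have hT : ∀ s ∈ T, (mapGraph f).IsNClique 3 s := fun s hs => (mem_filter.mp hs).2
  have hdisj : (T : Set (Finset α)).PairwiseDisjoint id := fun s hs t ht hst =>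
    disjoint_left.mpr fun u hus hut =>
      hst (eq_of_isNClique_three_of_mem (hT s hs) (hT t ht) hus hut)
  calc 3 * #T = ∑ s ∈ T, #s := by
        rw [sum_congr rfl fun s hs => (hT s hs).card_eq, sum_const, smul_eq_mul, mul_comm]
    _ = #(T.biUnion id) := (card_biUnion hdisj).symm
    _ ≤ (ptsOfPeriod f 3).ncard := by
      rw [← Set.ncard_coe_finset]
      refine Set.ncard_le_ncard (fun u hu => ?_) (Set.toFinite _)
      obtain ⟨s, hs, hus⟩ := mem_biUnion.mp hu
      exact isPeriodicPt_three_of_mem_isNClique_three (hT s hs) hus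

end mapGraph

lemma Polynomial.ncard_ptsOfPeriod_le {R : Type*} [CommRing R] [IsDomain R] (q : R[X])
    (hq : 1 < q.natDegree) {n : ℕ} (hn : n ≠ 0) :
    (ptsOfPeriod q.eval n).ncard ≤ q.natDegree ^ n := by
  classical
  set P := q.comp^[n] X - X
  have hdeg : P.natDegree = q.natDegree ^ n := by
    rw [natDegree_sub_eq_left_of_natDegree_lt] <;> simp [Nat.one_lt_pow hn hq]
  have hP : P ≠ 0 := ne_zero_of_natDegree_gt (hdeg ▸ Nat.one_lt_pow hn hq)
  calc (ptsOfPeriod q.eval n).ncard ≤ (P.roots.toFinset : Set R).ncard := by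
        refine Set.ncard_le_ncard (fun x hx => ?_) (Set.toFinite _)
        simpa [P, hP, sub_eq_zero] using hx.eq
    _ ≤ P.natDegree := by
        rw [Set.ncard_coe_finset]
        exact (Multiset.toFinset_card_le _).trans (card_roots' P)
    _ = q.natDegree ^ n := hdeg

/-- For every prime `p` and every `a ∈ ℤ/pℤ`, the quadratic orbital graph has at most two
triangles: the number of three-element cliques is `0`, `1` or `2`. -/
theorem quadGraph_triangles (p : ℕ) (hp : p.Prime) (a : ZMod p) :
    Nat.card {s : Finset (ZMod p) // (quadGraph p a).IsNClique 3 s} = 0 ∨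
      Nat.card {s : Finset (ZMod p) // (quadGraph p a).IsNClique 3 s} = 1 ∨
      Nat.card {s : Finset (ZMod p) // (quadGraph p a).IsNClique 3 s} = 2 := by
  have : Fact p.Prime := ⟨hp⟩
  have htriangles := mapGraph.three_mul_card_isNClique_three_le fun x : ZMod p => x ^ 2 + a
  have hperiodic := (X ^ 2 + C a).ncard_ptsOfPeriod_le (by simp) three_ne_zero
  simp only [eval_add, eval_pow, eval_X, eval_C, natDegree_X_pow_add_C] at hperiodic
  change 3 * Nat.card {s // (quadGraph p a).IsNClique 3 s} ≤ _ at htriangles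
  omega
end
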